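/- Let M and N be matroids on the same ground set U, let I be a common independent set, and let P be a simple directed cycle in the exchange graph G_{M,N}(I) admitting no shortcut arc. Then I ⊖ P (the symmetric-difference update of I along P) is a common independent set of M and N. -/

import Mathlib

/-!
Write `X` and `Y` for the vertices of `P` outside and inside `I`. Every `u ∈ X` has its
predecessor on `P` in `C_M(u, I)` and its successor in `C_N(u, I)`. Since `P` has no shortcut,
any exchange arc between two vertices of `P` is an arc of `P`, so `C_M(u, I)` meets `Y` only in the
predecessor of `u` and `C_N(u, I)` only in its successor. This is the setting of Krogdahl's
unique-matching lemma: a circuit inside `(I ∪ X) \ Y`, or more generally a circuit `C ⊆ I ∪ X`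
avoiding the partners of `C ∩ X`, can be eliminated against `C(u, I)` for any `u ∈ C ∩ X` to give
another such circuit meeting `X` in fewer elements; in the end it would lie in `I`.
-/

open Finset
open scoped Classical

/-- A matroid on a finite ground type `U`, given by its independent sets. -/
structure FinMatroid (U : Type*) [DecidableEq U] [Fintype U] where
  Indep : Finset U → Prop
  empty_indep : Indep ∅
  subset_indep : ∀ ⦃I J : Finset U⦄, I ⊆ J → Indep J → Indep I
  exchange : ∀ ⦃I J : Finset U⦄, Indep I → Indep J → I.card < J.card →
    ∃ u ∈ J, u ∉ I ∧ Indep (insert u I)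

namespace FinMatroid

variable {U : Type*} [DecidableEq U] [Fintype U]

/-- A circuit: an inclusion-wise minimal dependent set. -/
def Circuit (M : FinMatroid U) (C : Finset U) : Prop :=
  ¬ M.Indep C ∧ ∀ D ⊂ C, M.Indep D

/-- `sp M I`: elements `u ∉ I` with `I + u` dependent. -/
def sp (M : FinMatroid U) (I : Finset U) : Set U :=
  {u | u ∉ I ∧ ¬ M.Indep (insert u I)}

/-- The fundamental circuit of `u` for the independent set `I`
(for `u ∈ sp M I` this is the unique circuit contained in `I + u`). -/
noncomputable def fundC (M : FinMatroid U) (I : Finset U) (u : U) : Finset U :=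
  (insert u I).filter (fun w => M.Indep ((insert u I).erase w))

/-- The rank of a set: maximum size of an independent subset. -/
noncomputable def rk (M : FinMatroid U) (X : Finset U) : ℕ :=
  ((X.powerset).filter (fun I => M.Indep I)).sup Finset.card

end FinMatroid

variable {U : Type*} [DecidableEq U] [Fintype U]

/-- Independence predicate of the restriction of an independence system to `X`. -/
def RestrictIndep (Ind : Finset U → Prop) (X : Finset U) (I : Finset U) : Prop :=
  I ⊆ X ∧ Ind I

/-- Rank function associated with an independence predicate. -/
noncomputable def rkOf (Ind : Finset U → Prop) (X : Finset U) : ℕ :=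
  ((X.powerset).filter Ind).sup Finset.card

/-- Independence predicate of the contraction by `X`:
`I ⊆ U \ X` is independent iff `r(I ∪ X) - r(X) = |I|`. -/
def ContractIndepOf (Ind : Finset U → Prop) (X I : Finset U) : Prop :=
  Disjoint I X ∧ rkOf Ind (I ∪ X) = rkOf Ind X + I.card

/-- A base: a maximal independent set. -/
def BaseOf (Ind : Finset U → Prop) (B : Finset U) : Prop :=
  Ind B ∧ ∀ J, Ind J → B ⊆ J → J = B

/-- A circuit of a general independence system. -/
def CircuitOf (Ind : Finset U → Prop) (C : Finset U) : Prop :=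
  ¬ Ind C ∧ ∀ D ⊂ C, Ind D

/-- A simple directed cycle in the digraph with arc relation `A`:
`n` vertices `vtx 0, …, vtx (n-1)` (extended periodically), pairwise distinct,
with an arc from each vertex to the next. -/
structure SimpleDCycle {V : Type*} (A : V → V → Prop) where
  n : ℕ
  hn : 0 < n
  vtx : ℕ → V
  periodic : ∀ i, vtx (i + n) = vtx i
  inj : ∀ i j, i < n → j < n → vtx i = vtx j → i = j
  arc : ∀ i, A (vtx i) (vtx (i + 1))

/-- The set of arcs that the cycle passes through. -/
def SimpleDCycle.arcs {V : Type*} {A : V → V → Prop} (P : SimpleDCycle A) :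
    Set (V × V) :=
  {p | ∃ i < P.n, p = (P.vtx i, P.vtx (i + 1))}

/-- The set of vertices that the cycle passes through. -/
def SimpleDCycle.vtxSet {V : Type*} {A : V → V → Prop} (P : SimpleDCycle A) :
    Set V :=
  {v | ∃ i < P.n, P.vtx i = v}

/-- `a` is a shortcut arc for `P`: an arc of the digraph not traversed by `P`
such that `P + a` contains a simple directed cycle different from `P`. -/
def IsShortcut {V : Type*} (A : V → V → Prop) (P : SimpleDCycle A)
    (a : V × V) : Prop :=
  A a.1 a.2 ∧ a ∉ P.arcs ∧
    ∃ Q : SimpleDCycle A, Q.arcs ⊆ insert a P.arcs ∧ Q.arcs ≠ P.arcs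

/-- The arc relation of the exchange graph `G_{M,N}(I)`:  for `v ∈ I` and
`u ∉ I` there is an arc `v → u` iff `u ∈ sp_M(I)` and `v ∈ C_M(u,I) - u`,
and an arc `u → v` iff `u ∈ sp_N(I)` and `v ∈ C_N(u,I) - u`. -/
def ExchangeArc {U : Type*} [DecidableEq U] [Fintype U]
    (M N : FinMatroid U) (I : Finset U) (a b : U) : Prop :=
  (a ∈ I ∧ b ∉ I ∧ b ∈ M.sp I ∧ a ∈ (M.fundC I b).erase b) ∨
  (a ∉ I ∧ b ∈ I ∧ a ∈ N.sp I ∧ b ∈ (N.fundC I a).erase a)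

namespace FinMatroid

variable {M : FinMatroid U}

theorem Circuit.not_subset_indep {C J : Finset U} (hC : M.Circuit C) (hJ : M.Indep J) :
    ¬ C ⊆ J :=
  fun h => hC.1 (M.subset_indep h hJ)

theorem exists_circuit_subset {S : Finset U} (hS : ¬ M.Indep S) : ∃ C ⊆ S, M.Circuit C := by
  obtain ⟨C, hCS, hCmin⟩ :=
    Finset.exists_minimal (s := S.powerset.filter (fun T => ¬ M.Indep T)) ⟨S, by simp [hS]⟩
  rw [mem_filter, mem_powerset] at hCS
  refine ⟨C, hCS.1, hCS.2, fun D hDC => ?_⟩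
  by_contra hD
  exact hDC.2 (hCmin (by simp [hD, hDC.subset.trans hCS.1]) hDC.subset)

theorem exists_maximal_indep_subset {J S : Finset U} (hJ : M.Indep J) (hJS : J ⊆ S) :
    ∃ B, J ⊆ B ∧ B ⊆ S ∧ M.Indep B ∧ ∀ x ∈ S, x ∉ B → ¬ M.Indep (insert x B) := by
  obtain ⟨B, hB, hBmax⟩ := (S.powerset.filter (fun B => M.Indep B ∧ J ⊆ B)).exists_max_image
    card ⟨J, by simp [hJ, hJS]⟩
  simp only [mem_filter, mem_powerset] at hB hBmax
  refine ⟨B, hB.2.2, hB.1, hB.2.1, fun x hxS hxB hx => ?_⟩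
  have := hBmax _ ⟨insert_subset hxS hB.1, hx, hB.2.2.trans (subset_insert x B)⟩
  rw [card_insert_of_notMem hxB] at this
  omega

theorem Circuit.not_indep_union_erase {C₁ C₂ : Finset U} (h₁ : M.Circuit C₁)
    (h₂ : M.Circuit C₂) (hne : C₁ ≠ C₂) {e : U} (he₁ : e ∈ C₁) (he₂ : e ∈ C₂) :
    ¬ M.Indep ((C₁ ∪ C₂).erase e) := by
  intro hJ
  obtain ⟨f, hf₁, hf₂⟩ : ∃ f ∈ C₁, f ∉ C₂ :=
    not_subset.mp fun h => h₁.1 (h₂.2 C₁ (ssubset_of_subset_of_ne h hne))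
  -- `C₁ - f` extends to a maximal independent `B ⊆ C₁ ∪ C₂`, which misses `f` and some `g ∈ C₂`,
  -- so it is smaller than `(C₁ ∪ C₂) - e` and can be augmented from it.
  obtain ⟨B, hB₁, hBS, hB, hBmax⟩ := exists_maximal_indep_subset (S := C₁ ∪ C₂)
    (h₁.2 _ (erase_ssubset hf₁)) ((erase_subset f C₁).trans subset_union_left)
  have hfB : f ∉ B := fun hf => h₁.not_subset_indep hB fun x hx => by
    obtain rfl | hxf := eq_or_ne x f
    exacts [hf, hB₁ (mem_erase.mpr ⟨hxf, hx⟩)]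
  obtain ⟨g, hg₂, hgB⟩ := not_subset.mp (h₂.not_subset_indep hB)
  have hgf : g ≠ f := by rintro rfl; exact hf₂ hg₂
  have hcard : B.card < ((C₁ ∪ C₂).erase e).card := by
    have hsub : B ⊆ ((C₁ ∪ C₂).erase f).erase g := fun x hx =>
      mem_erase.mpr ⟨by rintro rfl; exact hgB hx,
        mem_erase.mpr ⟨by rintro rfl; exact hfB hx, hBS hx⟩⟩
    have h2 := card_le_card hsub
    rw [card_erase_of_mem (mem_erase.mpr ⟨hgf, mem_union_right _ hg₂⟩),
      card_erase_of_mem (mem_union_left _ hf₁)] at h2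
    rw [card_erase_of_mem (mem_union_left _ he₁)]
    have : 1 < (C₁ ∪ C₂).card := one_lt_card.mpr ⟨f, mem_union_left _ hf₁, e, mem_union_left _ he₁,
      by rintro rfl; exact hf₂ he₂⟩
    omega
  obtain ⟨x, hxJ, hxB, hx⟩ := M.exchange hB hJ hcard
  exact hBmax x (mem_of_mem_erase hxJ) hxB hx

theorem Circuit.exists_circuit_subset_union_erase {C₁ C₂ : Finset U} (h₁ : M.Circuit C₁)
    (h₂ : M.Circuit C₂) (hne : C₁ ≠ C₂) {e : U} (he₁ : e ∈ C₁) (he₂ : e ∈ C₂) :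
    ∃ D ⊆ (C₁ ∪ C₂).erase e, M.Circuit D :=
  exists_circuit_subset (h₁.not_indep_union_erase h₂ hne he₁ he₂)

theorem Circuit.mem_of_subset_insert {I C : Finset U} {u : U} (hI : M.Indep I)
    (hC : M.Circuit C) (hCu : C ⊆ insert u I) : u ∈ C := by
  by_contra hu
  exact hC.not_subset_indep hI fun x hx =>
    (mem_insert.mp (hCu hx)).resolve_left (by rintro rfl; exact hu hx)

theorem Circuit.eq_of_subset_insert {I C₁ C₂ : Finset U} {u : U} (hI : M.Indep I)
    (h₁ : M.Circuit C₁) (h₂ : M.Circuit C₂) (hC₁ : C₁ ⊆ insert u I) (hC₂ : C₂ ⊆ insert u I) :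
    C₁ = C₂ := by
  by_contra hne
  refine h₁.not_indep_union_erase h₂ hne (h₁.mem_of_subset_insert hI hC₁)
    (h₂.mem_of_subset_insert hI hC₂) (M.subset_indep (fun x hx => ?_) hI)
  obtain ⟨hxu, hx⟩ := mem_erase.mp hx
  exact (mem_insert.mp ((union_subset hC₁ hC₂) hx)).resolve_left hxu

theorem fundC_subset_insert (I : Finset U) (u : U) : M.fundC I u ⊆ insert u I :=
  filter_subset _ _

theorem fundC_eq_of_circuit {I C : Finset U} {u : U} (hI : M.Indep I) (hC : M.Circuit C)
    (hCu : C ⊆ insert u I) : M.fundC I u = C := by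
  ext w
  simp only [fundC, mem_filter]
  constructor
  · rintro ⟨-, hw⟩
    by_contra hwC
    exact hC.not_subset_indep hw fun x hx =>
      mem_erase.mpr ⟨by rintro rfl; exact hwC hx, hCu hx⟩
  · intro hwC
    refine ⟨hCu hwC, by_contra fun hw => ?_⟩
    obtain ⟨D, hD, hDc⟩ := exists_circuit_subset hw
    have hDC := hDc.eq_of_subset_insert hI hC (hD.trans (erase_subset _ _)) hCu
    exact notMem_erase w _ (hD (hDC ▸ hwC))

theorem circuit_fundC {I : Finset U} {u : U} (hI : M.Indep I) (hu : u ∈ M.sp I) :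
    M.Circuit (M.fundC I u) := by
  obtain ⟨C, hCu, hC⟩ := exists_circuit_subset hu.2
  rwa [fundC_eq_of_circuit hI hC hCu]

theorem mem_fundC_self {I : Finset U} {u : U} (hI : M.Indep I) (hu : u ∈ M.sp I) :
    u ∈ M.fundC I u :=
  (circuit_fundC hI hu).mem_of_subset_insert hI (fundC_subset_insert I u)

theorem exists_circuit_inter_ssubset {I X Y C : Finset U} {m : U → U} (hI : M.Indep I)
    (hX : ∀ u ∈ X, u ∈ M.sp I) (hm : Set.InjOn m X)
    (hmatch : ∀ u ∈ X, M.fundC I u ∩ Y = {m u}) (hC : M.Circuit C) (hCIX : C ⊆ I ∪ X)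
    (hCm : ∀ x ∈ C ∩ X, m x ∉ C) {u : U} (hu : u ∈ C ∩ X) :
    ∃ D, M.Circuit D ∧ D ⊆ I ∪ X ∧ (∀ x ∈ D ∩ X, m x ∉ D) ∧ D ∩ X ⊂ C ∩ X := by
  obtain ⟨huC, huX⟩ := mem_inter.mp hu
  have hmatch_iff : ∀ x ∈ X, m x ∈ M.fundC I u ↔ x = u := fun x hxX => by
    have : m x ∈ M.fundC I u ↔ m x ∈ M.fundC I u ∩ Y := by
      simp [(mem_inter.mp (hmatch x hxX ▸ mem_singleton_self (m x))).2]
    rw [this, hmatch u huX, mem_singleton]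
    exact hm.eq_iff hxX huX
  have hCF : C ≠ M.fundC I u := fun h => hCm u hu (h ▸ (hmatch_iff u huX).mpr rfl)
  obtain ⟨D, hD, hDc⟩ := hC.exists_circuit_subset_union_erase (circuit_fundC hI (hX u huX)) hCF
    huC (mem_fundC_self hI (hX u huX))
  have hFI : ∀ x ∈ M.fundC I u, x ≠ u → x ∈ I := fun x hx hxu =>
    (mem_insert.mp (fundC_subset_insert I u hx)).resolve_left hxu
  have hDX : D ∩ X ⊆ (C ∩ X).erase u := fun x hx => by
    obtain ⟨hxD, hxX⟩ := mem_inter.mp hx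
    obtain ⟨hxu, hx⟩ := mem_erase.mp (hD hxD)
    obtain hxC | hxF := mem_union.mp hx
    · exact mem_erase.mpr ⟨hxu, mem_inter.mpr ⟨hxC, hxX⟩⟩
    · exact absurd (hFI x hxF hxu) (hX x hxX).1
  refine ⟨D, hDc, fun x hx => ?_, fun x hx hmx => ?_, hDX.trans_ssubset (erase_ssubset hu)⟩
  · obtain ⟨hxu, hx⟩ := mem_erase.mp (hD hx)
    obtain hxC | hxF := mem_union.mp hx
    exacts [hCIX hxC, mem_union_left X (hFI x hxF hxu)]
  · obtain ⟨hxu, hxCX⟩ := mem_erase.mp (hDX hx)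
    obtain hmxC | hmxF := mem_union.mp (mem_of_mem_erase (hD hmx))
    exacts [hCm x hxCX hmxC, hxu ((hmatch_iff x (mem_inter.mp hx).2).mp hmxF)]

/-- A strong form of Krogdahl's unique-matching lemma. -/
theorem indep_union_sdiff_of_fundC_inter_eq_singleton {I X Y : Finset U} {m : U → U}
    (hI : M.Indep I) (hX : ∀ u ∈ X, u ∈ M.sp I) (hm : Set.InjOn m X)
    (hmatch : ∀ u ∈ X, M.fundC I u ∩ Y = {m u}) : M.Indep ((I ∪ X) \ Y) := by
  have hmY : ∀ x ∈ X, m x ∈ Y := fun x hx =>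
    (mem_inter.mp (hmatch x hx ▸ mem_singleton_self (m x))).2
  by_contra hdep
  obtain ⟨C₀, hC₀, hC₀c⟩ := exists_circuit_subset hdep
  obtain ⟨C, hC, hCmin⟩ := Finset.exists_min_image
    (univ.filter fun C => M.Circuit C ∧ C ⊆ I ∪ X ∧ ∀ x ∈ C ∩ X, m x ∉ C)
    (fun C => (C ∩ X).card) ⟨C₀, mem_filter.mpr ⟨mem_univ _, hC₀c, hC₀.trans sdiff_subset,
      fun x hx hmx => (mem_sdiff.mp (hC₀ hmx)).2 (hmY x (mem_inter.mp hx).2)⟩⟩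
  obtain ⟨-, hCc, hCIX, hCm⟩ := mem_filter.mp hC
  obtain hCX | ⟨u, hu⟩ := (C ∩ X).eq_empty_or_nonempty
  · refine hCc.not_subset_indep hI fun x hx => (mem_union.mp (hCIX hx)).resolve_right fun hxX => ?_
    simpa [hCX] using mem_inter.mpr ⟨hx, hxX⟩
  · obtain ⟨D, hDc, hDIX, hDm, hDC⟩ := exists_circuit_inter_ssubset hI hX hm hmatch hCc hCIX hCm hu
    exact (hCmin D (mem_filter.mpr ⟨mem_univ _, hDc, hDIX, hDm⟩)).not_gt (card_lt_card hDC)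

end FinMatroid

namespace SimpleDCycle

variable {V : Type*} {A : V → V → Prop} (P : SimpleDCycle A)

theorem vtx_mod (i : ℕ) : P.vtx (i % P.n) = P.vtx i :=
  Function.Periodic.map_mod_nat P.periodic i

theorem vtx_eq_vtx_iff {i j : ℕ} : P.vtx i = P.vtx j ↔ i % P.n = j % P.n := by
  refine ⟨fun h => P.inj _ _ (Nat.mod_lt _ P.hn) (Nat.mod_lt _ P.hn) ?_, fun h => ?_⟩
  · rwa [P.vtx_mod, P.vtx_mod]
  · rw [← P.vtx_mod i, h, P.vtx_mod]

theorem mem_vtxSet_iff {v : V} : v ∈ P.vtxSet ↔ ∃ i, P.vtx i = v :=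
  ⟨fun ⟨i, _, h⟩ => ⟨i, h⟩, fun ⟨i, h⟩ => ⟨i % P.n, Nat.mod_lt _ P.hn, (P.vtx_mod i).trans h⟩⟩

theorem mem_arcs_iff {v w : V} : (v, w) ∈ P.arcs ↔ ∃ i, P.vtx i = v ∧ P.vtx (i + 1) = w := by
  refine ⟨fun ⟨i, _, h⟩ => ⟨i, (Prod.ext_iff.mp h).1.symm, (Prod.ext_iff.mp h).2.symm⟩,
    fun ⟨i, hv, hw⟩ => ⟨i % P.n, Nat.mod_lt _ P.hn, ?_⟩⟩
  rw [P.vtx_mod, hv, ← hw, P.vtx_eq_vtx_iff.mpr (Nat.ModEq.add_right 1 (Nat.mod_modEq i P.n))]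

theorem rel_of_mem_arcs {v w : V} (h : (v, w) ∈ P.arcs) : A v w := by
  obtain ⟨i, rfl, rfl⟩ := P.mem_arcs_iff.mp h
  exact P.arc i

theorem mem_vtxSet_of_mem_arcs {v w : V} (h : (v, w) ∈ P.arcs) : v ∈ P.vtxSet ∧ w ∈ P.vtxSet := by
  obtain ⟨i, rfl, rfl⟩ := P.mem_arcs_iff.mp h
  exact ⟨P.mem_vtxSet_iff.mpr ⟨i, rfl⟩, P.mem_vtxSet_iff.mpr ⟨i + 1, rfl⟩⟩

theorem exists_mem_arcs_fst {v : V} (hv : v ∈ P.vtxSet) : ∃ w, (v, w) ∈ P.arcs := by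
  obtain ⟨i, rfl⟩ := P.mem_vtxSet_iff.mp hv
  exact ⟨_, P.mem_arcs_iff.mpr ⟨i, rfl, rfl⟩⟩

theorem exists_mem_arcs_snd {w : V} (hw : w ∈ P.vtxSet) : ∃ v, (v, w) ∈ P.arcs := by
  obtain ⟨i, rfl⟩ := P.mem_vtxSet_iff.mp hw
  refine ⟨_, P.mem_arcs_iff.mpr ⟨i + P.n - 1, rfl, ?_⟩⟩
  rw [Nat.sub_add_cancel (by have := P.hn; omega), P.periodic]

theorem eq_of_mem_arcs_of_mem_arcs_left {v w w' : V} (h : (v, w) ∈ P.arcs)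
    (h' : (v, w') ∈ P.arcs) : w = w' := by
  obtain ⟨i, rfl, rfl⟩ := P.mem_arcs_iff.mp h
  obtain ⟨j, hj, rfl⟩ := P.mem_arcs_iff.mp h'
  exact P.vtx_eq_vtx_iff.mpr (Nat.ModEq.add_right 1 (P.vtx_eq_vtx_iff.mp hj.symm))

theorem eq_of_mem_arcs_of_mem_arcs_right {v v' w : V} (h : (v, w) ∈ P.arcs)
    (h' : (v', w) ∈ P.arcs) : v = v' := by
  obtain ⟨i, rfl, rfl⟩ := P.mem_arcs_iff.mp h
  obtain ⟨j, rfl, hj⟩ := P.mem_arcs_iff.mp h'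
  exact P.vtx_eq_vtx_iff.mpr (Nat.ModEq.add_right_cancel' 1 (P.vtx_eq_vtx_iff.mp hj.symm))

theorem vtx_add_mod_succ_cases (j m l : ℕ) :
    (P.vtx (j + l % (m + 1)), P.vtx (j + (l + 1) % (m + 1))) = (P.vtx (j + m), P.vtx j) ∨
      P.vtx (j + (l + 1) % (m + 1)) = P.vtx (j + l % (m + 1) + 1) := by
  have hl : l % (m + 1) ≤ m := Nat.le_of_lt_succ (Nat.mod_lt l (Nat.add_one_pos m))
  obtain hl | hl := hl.lt_or_eq
  · right
    rw [(Nat.ModEq.add_right 1 (Nat.mod_modEq l (m + 1))).symm, Nat.mod_eq_of_lt (by omega),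
      Nat.add_assoc]
  · left
    rw [hl, Nat.succ_mod_succ_eq_zero_iff.mpr hl, Nat.add_zero]

def chordCycle (j m : ℕ) (hm : m < P.n) (hchord : A (P.vtx (j + m)) (P.vtx j)) :
    SimpleDCycle A where
  n := m + 1
  hn := m.succ_pos
  vtx l := P.vtx (j + l % (m + 1))
  periodic l := by rw [Nat.add_mod_right]
  inj l₁ l₂ h₁ h₂ h := by
    rw [Nat.mod_eq_of_lt h₁, Nat.mod_eq_of_lt h₂, P.vtx_eq_vtx_iff] at h
    have := Nat.ModEq.add_left_cancel' j h
    rwa [Nat.ModEq, Nat.mod_eq_of_lt (by omega), Nat.mod_eq_of_lt (by omega)] at this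
  arc l := by
    obtain h | h := P.vtx_add_mod_succ_cases j m l
    · rw [Prod.mk.injEq] at h
      rw [h.1, h.2]
      exact hchord
    · rw [h]
      exact P.arc _

theorem chordCycle_arcs_subset (j m : ℕ) (hm : m < P.n) (hchord : A (P.vtx (j + m)) (P.vtx j)) :
    (P.chordCycle j m hm hchord).arcs ⊆ insert (P.vtx (j + m), P.vtx j) P.arcs := by
  rintro _ ⟨l, -, rfl⟩
  obtain h | h := P.vtx_add_mod_succ_cases j m l
  · exact Or.inl h
  · exact Or.inr (P.mem_arcs_iff.mpr ⟨_, rfl, h.symm⟩)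

theorem chord_mem_chordCycle_arcs (j m : ℕ) (hm : m < P.n)
    (hchord : A (P.vtx (j + m)) (P.vtx j)) :
    (P.vtx (j + m), P.vtx j) ∈ (P.chordCycle j m hm hchord).arcs := by
  refine ⟨m, m.lt_succ_self, ?_⟩
  show _ = (P.vtx (j + m % (m + 1)), P.vtx (j + (m + 1) % (m + 1)))
  rw [Nat.mod_eq_of_lt m.lt_succ_self, Nat.mod_self, Nat.add_zero]

theorem isShortcut_of_notMem_arcs {x y : V} (hx : x ∈ P.vtxSet) (hy : y ∈ P.vtxSet)
    (hxy : A x y) (hP : (x, y) ∉ P.arcs) : IsShortcut A P (x, y) := by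
  obtain ⟨i, rfl⟩ := P.mem_vtxSet_iff.mp hx
  obtain ⟨j, hj, rfl⟩ := hy
  set m := (i + P.n - j) % P.n
  have hi : P.vtx (j + m) = P.vtx i := by
    rw [P.vtx_eq_vtx_iff, Nat.add_mod_mod, Nat.add_sub_cancel' (by omega), Nat.add_mod_right]
  rw [← hi] at hxy hP ⊢
  refine ⟨hxy, hP, P.chordCycle j m (Nat.mod_lt _ P.hn) hxy, P.chordCycle_arcs_subset .., ?_⟩
  exact fun h => hP (h ▸ P.chord_mem_chordCycle_arcs ..)

end SimpleDCycle

noncomputable def cycleUpdate {A : U → U → Prop} (I : Finset U) (P : SimpleDCycle A) : Finset U :=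
  (I ∪ univ.filter (fun x => x ∈ P.vtxSet ∧ x ∉ I)) \ univ.filter (fun x => x ∈ P.vtxSet ∧ x ∈ I)

infixl:70 " ⊖ " => cycleUpdate

section ExchangeGraph

variable {M N : FinMatroid U} {I : Finset U}

theorem exchangeArc_to_notMem_iff {u y : U} (hu : u ∉ I) :
    ExchangeArc M N I y u ↔ y ∈ I ∧ u ∈ M.sp I ∧ y ∈ M.fundC I u := by
  refine ⟨?_, fun ⟨hy, hsp, hyF⟩ => Or.inl ⟨hy, hu, hsp, mem_erase.mpr ⟨?_, hyF⟩⟩⟩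
  · rintro (⟨hy, -, hsp, hyF⟩ | ⟨-, huI, -⟩)
    exacts [⟨hy, hsp, mem_of_mem_erase hyF⟩, absurd huI hu]
  · rintro rfl; exact hu hy

theorem exchangeArc_from_notMem_iff {u y : U} (hu : u ∉ I) :
    ExchangeArc M N I u y ↔ y ∈ I ∧ u ∈ N.sp I ∧ y ∈ N.fundC I u := by
  refine ⟨?_, fun ⟨hy, hsp, hyF⟩ => Or.inr ⟨hu, hy, hsp, mem_erase.mpr ⟨?_, hyF⟩⟩⟩
  · rintro (⟨huI, -⟩ | ⟨-, hy, hsp, hyF⟩)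
    exacts [absurd huI hu, ⟨hy, hsp, mem_of_mem_erase hyF⟩]
  · rintro rfl; exact hu hy

theorem indep_cycleUpdate_left (hI : M.Indep I) (P : SimpleDCycle (ExchangeArc M N I))
    (hns : ∀ a, ¬ IsShortcut (ExchangeArc M N I) P a) : M.Indep (I ⊖ P) := by
  choose! m hm using fun u (hu : u ∈ P.vtxSet) => P.exists_mem_arcs_snd hu
  have harc : ∀ u ∈ P.vtxSet, u ∉ I → m u ∈ I ∧ u ∈ M.sp I ∧ m u ∈ M.fundC I u :=
    fun u hu huI => (exchangeArc_to_notMem_iff huI).mp (P.rel_of_mem_arcs (hm u hu))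
  refine M.indep_union_sdiff_of_fundC_inter_eq_singleton (m := m) hI (fun u hu => ?_)
    (fun u hu u' hu' h => ?_) (fun u hu => ?_)
  all_goals replace hu := (mem_filter.mp hu).2
  on_goal 2 => replace hu' := (mem_filter.mp hu').2
  · exact (harc u hu.1 hu.2).2.1
  · exact P.eq_of_mem_arcs_of_mem_arcs_left (h ▸ hm u hu.1) (hm u' hu'.1)
  ext y
  simp only [mem_inter, mem_filter, mem_univ, true_and, mem_singleton]
  refine ⟨fun ⟨hyF, hyP, hyI⟩ => ?_, ?_⟩
  · have hyu : ExchangeArc M N I y u :=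
      (exchangeArc_to_notMem_iff hu.2).mpr ⟨hyI, (harc u hu.1 hu.2).2.1, hyF⟩
    by_contra hne
    refine hns _ (P.isShortcut_of_notMem_arcs hyP hu.1 hyu fun h => hne ?_)
    exact P.eq_of_mem_arcs_of_mem_arcs_right h (hm u hu.1)
  · rintro rfl
    exact ⟨(harc u hu.1 hu.2).2.2, (P.mem_vtxSet_of_mem_arcs (hm u hu.1)).1,
      (harc u hu.1 hu.2).1⟩

theorem indep_cycleUpdate_right (hI : N.Indep I) (P : SimpleDCycle (ExchangeArc M N I))
    (hns : ∀ a, ¬ IsShortcut (ExchangeArc M N I) P a) : N.Indep (I ⊖ P) := by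
  choose! m hm using fun u (hu : u ∈ P.vtxSet) => P.exists_mem_arcs_fst hu
  have harc : ∀ u ∈ P.vtxSet, u ∉ I → m u ∈ I ∧ u ∈ N.sp I ∧ m u ∈ N.fundC I u :=
    fun u hu huI => (exchangeArc_from_notMem_iff huI).mp (P.rel_of_mem_arcs (hm u hu))
  refine N.indep_union_sdiff_of_fundC_inter_eq_singleton (m := m) hI (fun u hu => ?_)
    (fun u hu u' hu' h => ?_) (fun u hu => ?_)
  all_goals replace hu := (mem_filter.mp hu).2
  on_goal 2 => replace hu' := (mem_filter.mp hu').2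
  · exact (harc u hu.1 hu.2).2.1
  · exact P.eq_of_mem_arcs_of_mem_arcs_right (h ▸ hm u hu.1) (hm u' hu'.1)
  ext y
  simp only [mem_inter, mem_filter, mem_univ, true_and, mem_singleton]
  refine ⟨fun ⟨hyF, hyP, hyI⟩ => ?_, ?_⟩
  · have huy : ExchangeArc M N I u y :=
      (exchangeArc_from_notMem_iff hu.2).mpr ⟨hyI, (harc u hu.1 hu.2).2.1, hyF⟩
    by_contra hne
    refine hns _ (P.isShortcut_of_notMem_arcs hu.1 hyP huy fun h => hne ?_)
    exact P.eq_of_mem_arcs_of_mem_arcs_left h (hm u hu.1)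
  · rintro rfl
    exact ⟨(harc u hu.1 hu.2).2.2, (P.mem_vtxSet_of_mem_arcs (hm u hu.1)).2,
      (harc u hu.1 hu.2).1⟩

end ExchangeGraph

theorem cycle_update_common_indep (M N : FinMatroid U) (I : Finset U)
    (hM : M.Indep I) (hN : N.Indep I)
    (P : SimpleDCycle (ExchangeArc M N I))
    (hns : ∀ a : U × U, ¬ IsShortcut (ExchangeArc M N I) P a) :
    M.Indep ((I ∪ Finset.univ.filter (fun x : U => x ∈ P.vtxSet ∧ x ∉ I)) \
        Finset.univ.filter (fun x : U => x ∈ P.vtxSet ∧ x ∈ I)) ∧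
      N.Indep ((I ∪ Finset.univ.filter (fun x : U => x ∈ P.vtxSet ∧ x ∉ I)) \
        Finset.univ.filter (fun x : U => x ∈ P.vtxSet ∧ x ∈ I)) :=
  ⟨indep_cycleUpdate_left hM P hns, indep_cycleUpdate_right hN P hns⟩
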